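/- arXiv:2208.07437 — 2 statements merged into one kernel-verified Lean document; each statement's English description precedes it below -/
import Mathlib

section
/- Let β > 0, let Φ_{k+1} = I_{l_μ} ⊗ φ_{k+1}ᵀ with φ_{k+1} ∈ R^{l_y}, let N = [N_1 ⋯ N_{n_f}] with each N_j ∈ R^{l_y × l_μ}, let Φ̄_i be the vertical stack of Φ_{i−1}, …, Φ_{i−n_f}, and define A = Σ_{i=1}^k λ^{k−i} Φ̄_iᵀ Nᵀ N Φ̄_i + λ^k β I, b = Σ_{i=1}^k λ^{k−i} Φ̄_iᵀ Nᵀ (z_i − N V̄_i), θ_{k+1} = −A⁻¹ b, and ν_{k+1} = Φ_{k+1} θ_{k+1}. Then ν_{k+1} lies in the column space of the matrix [N_1ᵀ ⋯ N_{n_f}ᵀ] ∈ R^{l_μ × n_f l_y}. -/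
/-!
Write `A = S + λᵏβ I`. Since `A θ = -b`, we get `λᵏβ θ = -b - S θ`, so `θ` lies in every subspace
containing `b` and the range of `S`. Both are sums of vectors `Φ̄ᵢᵀ Nᵀ y`, so it suffices that
`Φ_{k+1}` maps these into the column space of `[N₁ᵀ ⋯ N_{n_f}ᵀ]`. This is the Kronecker identity
`(I ⊗ φᵀ)(I ⊗ ψ) = (φᵀψ) I`, which gives `Φ_{k+1} Φ̄ᵢᵀ Nᵀ = ∑ⱼ (φ_{k+1}ᵀ φ_{i-1-j}) Nⱼᵀ`.
-/

namespace Matrix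

variable {R ι μ η κ ν : Type*}

def fromRowBlocks (M : ι → Matrix μ κ R) : Matrix (ι × μ) κ R :=
  of fun p => M p.1 p.2

def fromColBlocks (M : ι → Matrix κ μ R) : Matrix κ (ι × μ) R :=
  of fun r p => M p.1 r p.2

/-- The Kronecker product `I_μ ⊗ φᵀ`. -/
def kronRow [Zero R] (μ : Type*) [DecidableEq μ] (φ : η → R) : Matrix μ (μ × η) R :=
  of fun r p => if r = p.1 then φ p.2 else 0

lemma transpose_fromRowBlocks (M : ι → Matrix μ κ R) :
    (fromRowBlocks M)ᵀ = fromColBlocks fun j => (M j)ᵀ :=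
  rfl

lemma transpose_fromColBlocks (M : ι → Matrix κ μ R) :
    (fromColBlocks M)ᵀ = fromRowBlocks fun j => (M j)ᵀ :=
  rfl

lemma mul_fromColBlocks [NonUnitalNonAssocSemiring R] [Fintype κ] (P : Matrix ν κ R)
    (M : ι → Matrix κ μ R) : P * fromColBlocks M = fromColBlocks fun j => P * M j :=
  rfl

lemma fromColBlocks_mul_fromRowBlocks [NonUnitalNonAssocSemiring R] [Fintype ι] [Fintype μ]
    (M : ι → Matrix κ μ R) (M' : ι → Matrix μ ν R) :
    fromColBlocks M * fromRowBlocks M' = ∑ j, M j * M' j := by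
  ext r s
  simp [mul_apply, sum_apply, Fintype.sum_prod_type, fromColBlocks, fromRowBlocks]

lemma kronRow_mul_transpose_kronRow [CommSemiring R] [Fintype μ] [Fintype η] [DecidableEq μ]
    (φ ψ : η → R) : kronRow μ φ * (kronRow μ ψ)ᵀ = (φ ⬝ᵥ ψ) • (1 : Matrix μ μ R) := by
  ext r s
  simp only [mul_apply, transpose_apply, kronRow, of_apply, Fintype.sum_prod_type, smul_apply,
    one_apply, dotProduct]
  by_cases h : r = s <;> simp [h]

lemma kronRow_mul_transpose_fromRowBlocks_mul [CommSemiring R] [Fintype ι] [Fintype μ]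
    [Fintype η] [DecidableEq μ] [DecidableEq η] (φ : η → R) (ψ : ι → η → R)
    (N : ι → Matrix η μ R) :
    kronRow μ φ * (fromRowBlocks fun j => kronRow μ (ψ j))ᵀ * (fromColBlocks N)ᵀ =
      fromColBlocks (fun j => (N j)ᵀ) *
        fromRowBlocks fun j => (φ ⬝ᵥ ψ j) • (1 : Matrix η η R) := by
  rw [transpose_fromRowBlocks, transpose_fromColBlocks, mul_fromColBlocks,
    fromColBlocks_mul_fromRowBlocks, fromColBlocks_mul_fromRowBlocks]
  simp [kronRow_mul_transpose_kronRow]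

lemma inv_add_smul_one_mulVec_mem {K n : Type*} [Field K] [Fintype n] [DecidableEq n]
    {U : Submodule K (n → K)} {S : Matrix n n K} (hS : ∀ x, S *ᵥ x ∈ U) {c : K} (hc : c ≠ 0)
    (hA : IsUnit (S + c • 1)) {b : n → K} (hb : b ∈ U) : (S + c • 1)⁻¹ *ᵥ b ∈ U := by
  have h : (S + c • 1) *ᵥ ((S + c • 1)⁻¹ *ᵥ b) = b := by
    rw [mulVec_mulVec, mul_nonsing_inv _ ((isUnit_iff_isUnit_det _).mp hA), one_mulVec]
  generalize (S + c • 1)⁻¹ *ᵥ b = θ at h ⊢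
  rw [add_mulVec, smul_mulVec, one_mulVec] at h
  rw [show θ = c⁻¹ • (b - S *ᵥ θ) by
    rw [← h, add_sub_cancel_left, smul_smul, inv_mul_cancel₀ hc, one_smul]]
  exact U.smul_mem _ (U.sub_mem hb (hS θ))

lemma posDef_sum_smul_transpose_mul_self_add_smul_one {ι m n : Type*} [Fintype m] [Fintype n]
    [DecidableEq n] (s : Finset ι) {w : ι → ℝ} (hw : ∀ i ∈ s, 0 ≤ w i) (B : ι → Matrix m n ℝ)
    {c : ℝ} (hc : 0 < c) : (∑ i ∈ s, w i • ((B i)ᵀ * B i) + c • 1).PosDef := by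
  refine PosDef.posSemidef_add (posSemidef_sum s fun i hi => ?_) (PosDef.one.smul hc)
  simpa using (posSemidef_conjTranspose_mul_self (B i)).smul (hw i hi)

end Matrix

open Matrix

/-- the range lemma — the parameter pre-estimate
`ν_{k+1} = Φ_{k+1} θ_{k+1}` lies in the column space of `[N_1ᵀ ⋯ N_{n_f}ᵀ]`. -/
theorem stmt_7 (lμ ly nf : ℕ) (k : ℕ) (β lam : ℝ)
    (hβ : 0 < β) (hlam : lam ∈ Set.Ioc (0 : ℝ) 1)
    (φ : ℤ → Fin ly → ℝ)
    (N : Fin nf → Matrix (Fin ly) (Fin lμ) ℝ)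
    (z : ℕ → Fin ly → ℝ) (Vbar : ℕ → Fin nf × Fin lμ → ℝ)
    -- `Φ t = I_{l_μ} ⊗ φ_tᵀ`, written entrywise
    (Φ : ℤ → Matrix (Fin lμ) (Fin lμ × Fin ly) ℝ)
    (hΦ : ∀ t i p, Φ t i p = if i = p.1 then φ t p.2 else 0)
    -- `Nmat = [N_1 ⋯ N_{n_f}]`
    (Nmat : Matrix (Fin ly) (Fin nf × Fin lμ) ℝ)
    (hNmat : ∀ r p, Nmat r p = N p.1 r p.2)
    -- `Φbar i` is the vertical stack of `Φ_{i−1}, …, Φ_{i−n_f}`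
    (Φbar : ℕ → Matrix (Fin nf × Fin lμ) (Fin lμ × Fin ly) ℝ)
    (hΦbar : ∀ (i : ℕ) p q, Φbar i p q = Φ ((i : ℤ) - 1 - (p.1 : ℤ)) p.2 q)
    (A : Matrix (Fin lμ × Fin ly) (Fin lμ × Fin ly) ℝ)
    (hA : A = (∑ i ∈ Finset.Icc 1 k,
        lam ^ (k - i) • ((Φbar i)ᵀ * Nmatᵀ * Nmat * Φbar i))
        + (lam ^ k * β) • (1 : Matrix (Fin lμ × Fin ly) (Fin lμ × Fin ly) ℝ))
    (b : Fin lμ × Fin ly → ℝ)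
    (hb : b = ∑ i ∈ Finset.Icc 1 k,
        lam ^ (k - i) • ((Φbar i)ᵀ * Nmatᵀ).mulVec (z i - Nmat.mulVec (Vbar i)))
    (θ : Fin lμ × Fin ly → ℝ) (hθ : θ = -(A⁻¹.mulVec b))
    (ν : Fin lμ → ℝ) (hν : ν = (Φ ((k : ℤ) + 1)).mulVec θ)
    -- `Nstack = [N_1ᵀ ⋯ N_{n_f}ᵀ]`
    (Nstack : Matrix (Fin lμ) (Fin nf × Fin ly) ℝ)
    (hNstack : ∀ r p, Nstack r p = N p.1 p.2 r) :
    ∃ w : Fin nf × Fin ly → ℝ, Nstack.mulVec w = ν := by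
  have hΦ' : ∀ t, Φ t = kronRow (Fin lμ) (φ t) := fun t => by ext; simp [hΦ, kronRow]
  have hNmat' : Nmat = fromColBlocks N := by ext; simp [hNmat, fromColBlocks]
  have hNstack' : Nstack = fromColBlocks fun j => (N j)ᵀ := by ext; simp [hNstack, fromColBlocks]
  have hΦbar' : ∀ i : ℕ,
      Φbar i = fromRowBlocks fun j : Fin nf => kronRow (Fin lμ) (φ ((i : ℤ) - 1 - j)) :=
    fun i => by ext; simp [hΦbar, hΦ', fromRowBlocks]
  let U := (LinearMap.range Nstack.mulVecLin).comap (Φ ((k : ℤ) + 1)).mulVecLin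
  have hU : ∀ i y, ((Φbar i)ᵀ * Nmatᵀ) *ᵥ y ∈ U := fun i y => by
    rw [Submodule.mem_comap, mulVecLin_apply, mulVec_mulVec, ← Matrix.mul_assoc, hΦ', hΦbar',
      hNmat', hNstack', kronRow_mul_transpose_fromRowBlocks_mul, ← mulVec_mulVec]
    exact ⟨_, rfl⟩
  have hSU : ∀ x, (∑ i ∈ Finset.Icc 1 k,
      lam ^ (k - i) • ((Φbar i)ᵀ * Nmatᵀ * Nmat * Φbar i)) *ᵥ x ∈ U := fun x => by
    rw [sum_mulVec]
    refine U.sum_mem fun i _ => ?_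
    rw [smul_mulVec, Matrix.mul_assoc _ Nmat, ← mulVec_mulVec]
    exact U.smul_mem _ (hU i _)
  have hbU : b ∈ U := hb ▸ U.sum_mem fun i _ => U.smul_mem _ (hU i _)
  have hc : 0 < lam ^ k * β := mul_pos (pow_pos hlam.1 k) hβ
  have hApd : A.PosDef := by
    convert posDef_sum_smul_transpose_mul_self_add_smul_one (Finset.Icc 1 k)
      (w := fun i => lam ^ (k - i)) (fun i _ => pow_nonneg hlam.1.le _) (fun i => Nmat * Φbar i)
      hc using 1
    simp [hA, transpose_mul, Matrix.mul_assoc]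
  have hθU : θ ∈ U := by
    rw [hA] at hApd
    rw [hθ, hA]
    exact U.neg_mem (inv_add_smul_one_mulVec_mem hSU hc.ne' hApd.isUnit hbU)
  obtain ⟨w, hw⟩ := hθU
  exact ⟨w, hw.trans hν.symm⟩
end

section
/- Let P be positive definite, λ > 0, B ∈ R^{m×n}, and define P' = λ⁻¹(P − P Bᵀ(λ I_m + B P Bᵀ)⁻¹ B P). Then P' is positive definite. -/
/-!
By the Woodbury identity the updated covariance is
`λ⁻¹ (P - P Bᴴ (λ I + B P Bᴴ)⁻¹ B P) = λ⁻¹ (P⁻¹ + λ⁻¹ Bᴴ B)⁻¹`, a positive multiple of the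
inverse of a positive definite matrix, hence positive definite.
-/

open Matrix

namespace Matrix

theorem inv_add_smul_mul_eq_sub {n m K : Type*} [Fintype n] [DecidableEq n] [Fintype m]
    [DecidableEq m] [Field K] {P : Matrix n n K} (hP : IsUnit P) {c : K} (hc : c ≠ 0)
    (U : Matrix n m K) (V : Matrix m n K) (hS : IsUnit (c • 1 + V * P * U)) :
    (P⁻¹ + c⁻¹ • (U * V))⁻¹ = P - P * U * (c • 1 + V * P * U)⁻¹ * V * P := by
  have hC : (c • 1 : Matrix m m K) * (c⁻¹ • 1) = 1 := by simp [smul_smul, hc]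
  have hCinv : (c⁻¹ • 1 : Matrix m m K)⁻¹ = c • 1 := inv_eq_left_inv hC
  have hUV : U * (c⁻¹ • 1 : Matrix m m K) * V = c⁻¹ • (U * V) := by
    rw [Matrix.mul_smul, Matrix.mul_one, Matrix.smul_mul]
  have hPinv : P⁻¹⁻¹ = P := nonsing_inv_nonsing_inv P ((isUnit_iff_isUnit_det P).1 hP)
  have woodbury := add_mul_mul_inv_eq_sub P⁻¹ U (c⁻¹ • 1) V (isUnit_nonsing_inv_iff.2 hP)
    (.of_mul_eq_one_right _ hC) (by rwa [hCinv, hPinv])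
  rwa [hUV, hCinv, hPinv] at woodbury

open scoped ComplexOrder

variable {n m 𝕜 : Type*} [Fintype n] [Fintype m] [RCLike 𝕜]

noncomputable def rlsCovUpdate [DecidableEq m] (c : 𝕜) (P : Matrix n n 𝕜) (B : Matrix m n 𝕜) :
    Matrix n n 𝕜 :=
  c⁻¹ • (P - P * Bᴴ * (c • 1 + B * P * Bᴴ)⁻¹ * B * P)

theorem PosDef.smul_one_add_mul_mul_conjTranspose [DecidableEq m] {P : Matrix n n 𝕜}
    (hP : P.PosDef) {c : 𝕜} (hc : 0 < c) (B : Matrix m n 𝕜) :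
    (c • (1 : Matrix m m 𝕜) + B * P * Bᴴ).PosDef :=
  (PosDef.one.smul hc).add_posSemidef (hP.posSemidef.mul_mul_conjTranspose_same B)

theorem PosDef.inv_add_smul_conjTranspose_mul_self [DecidableEq n] {P : Matrix n n 𝕜}
    (hP : P.PosDef) {c : 𝕜} (hc : 0 < c) (B : Matrix m n 𝕜) : (P⁻¹ + c • (Bᴴ * B)).PosDef :=
  hP.inv.add_posSemidef ((posSemidef_conjTranspose_mul_self B).smul hc.le)

theorem PosDef.rlsCovUpdate_eq [DecidableEq n] [DecidableEq m] {P : Matrix n n 𝕜}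
    (hP : P.PosDef) {c : 𝕜} (hc : 0 < c) (B : Matrix m n 𝕜) :
    rlsCovUpdate c P B = c⁻¹ • (P⁻¹ + c⁻¹ • (Bᴴ * B))⁻¹ := by
  rw [rlsCovUpdate, inv_add_smul_mul_eq_sub hP.isUnit hc.ne' _ _
    (hP.smul_one_add_mul_mul_conjTranspose hc B).isUnit]

theorem PosDef.rlsCovUpdate [DecidableEq n] [DecidableEq m] {P : Matrix n n 𝕜}
    (hP : P.PosDef) {c : 𝕜} (hc : 0 < c) (B : Matrix m n 𝕜) :
    (rlsCovUpdate c P B).PosDef := by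
  rw [hP.rlsCovUpdate_eq hc B]
  exact (hP.inv_add_smul_conjTranspose_mul_self (inv_pos.2 hc) B).inv.smul (inv_pos.2 hc)

end Matrix

/-- the RLS-updated covariance
`P' = λ⁻¹(P − P Bᵀ(λI + B P Bᵀ)⁻¹ B P)` is positive definite. -/
theorem stmt_15 (n m : ℕ) (lam : ℝ) (hlam : 0 < lam)
    (P : Matrix (Fin n) (Fin n) ℝ) (hP : P.PosDef)
    (B : Matrix (Fin m) (Fin n) ℝ)
    (P' : Matrix (Fin n) (Fin n) ℝ)
    (hP' : P' = lam⁻¹ • (P - P * Bᵀ *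
      (lam • (1 : Matrix (Fin m) (Fin m) ℝ) + B * P * Bᵀ)⁻¹ * B * P)) :
    P'.PosDef := by
  rw [hP', ← conjTranspose_eq_transpose_of_trivial]
  exact hP.rlsCovUpdate hlam B
end
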